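/- arXiv:2507.00445 — 7 statements merged into one kernel-verified Lean document; each statement's English description precedes it below -/
import Mathlib

section
/- Let X be a nonempty finite type, T ≥ 1, r : X → ℝ a reward, α > 0, and p^pre a positive pretrained policy sequence with soft value functions v_t and soft-optimal policy sequence p*. Then for every positive policy sequence p^θ and every initial distribution μ on X, the entropy-regularized objective J(p^θ) := E_{P^{p^θ}_μ}[r(x_0)] − α · Σ_{t=1}^{T} E_{P^{p^θ}_μ}[KL(p^θ_{t-1}(·|x_t) ‖ p^pre_{t-1}(·|x_t))] satisfies J(p^θ) = Σ_{x_T} μ(x_T) v_T(x_T) − α · Σ_{t=1}^{T} E_{P^{p^θ}_μ}[KL(p^θ_{t-1}(·|x_t) ‖ p*_{t-1}(·|x_t))]; that is, maximizing the PPO objective J is equivalent, up to an additive constant independent of p^θ, to minimizing the expected per-step reverse KL divergence to the soft-optimal policy. -/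
open Real

/-- KL divergence between two mass functions on a finite type, with the
convention `0 * log 0 = 0` (automatic, since `0 * _ = 0` in `ℝ`). -/
noncomputable def KLd {Y : Type*} [Fintype Y] (p q : Y → ℝ) : ℝ :=
  ∑ y, p y * Real.log (p y / q y)

/-- Product of transition probabilities along a trajectory `(x_{t-1}, …, x_0)`
(encoded as `y : Fin t → X`, with `y i = x_i`) starting from `x_t = x`:
`∏_{s=t}^{1} p_{s-1}(x_{s-1} | x_s)`. -/
noncomputable def chainProd {X : Type*} (p : ℕ → X → X → ℝ) (t : ℕ) (x : X)
    (y : Fin t → X) : ℝ :=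
  ∏ s : Fin t, p s (if h : (s : ℕ) + 1 < t then y ⟨(s : ℕ) + 1, h⟩ else x) (y s)

/-- The soft value functions: `v_0 = r` and, for `t ≥ 1`,
`v_t(x) = α * log ∑_{x_{t-1},…,x_0} (∏_{s=t}^{1} p_{s-1}(x_{s-1}|x_s)) exp(r(x_0)/α)`. -/
noncomputable def softValue {X : Type*} [Fintype X] (p : ℕ → X → X → ℝ) (r : X → ℝ)
    (α : ℝ) : ℕ → X → ℝ
  | 0, x => r x
  | (t + 1), x =>
      α * Real.log (∑ y : Fin (t + 1) → X,
        chainProd p (t + 1) x y * Real.exp (r (y 0) / α))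

/-- The soft-optimal policy
`p*_{t-1}(y|x) = p^pre_{t-1}(y|x) * exp(v_{t-1}(y)/α) / exp(v_t(x)/α)`.
The index `t : ℕ` here stands for `t-1`, so it uses `v_t` and `v_{t+1}`. -/
noncomputable def softOpt {X : Type*} [Fintype X] (p : ℕ → X → X → ℝ) (r : X → ℝ)
    (α : ℝ) (t : ℕ) (x y : X) : ℝ :=
  p t x y * Real.exp (softValue p r α t y / α) / Real.exp (softValue p r α (t + 1) x / α)

/-- The joint trajectory distribution
`P^q_μ(x_T,…,x_0) = μ(x_T) * ∏_{t=T}^{1} q_{t-1}(x_{t-1}|x_t)`, a trajectory being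
encoded as `x : Fin (T+1) → X` with `x i = x_i` (so `x (Fin.last T) = x_T`). -/
noncomputable def trajProb {X : Type*} (μ : X → ℝ) (q : ℕ → X → X → ℝ) (T : ℕ)
    (x : Fin (T + 1) → X) : ℝ :=
  μ (x (Fin.last T)) * ∏ t : Fin T, q t (x t.succ) (x t.castSucc)

/-- Expectation of `f` under the joint trajectory distribution `P^q_μ`. -/
noncomputable def trajExp {X : Type*} [Fintype X] (μ : X → ℝ) (q : ℕ → X → X → ℝ)
    (T : ℕ) (f : (Fin (T + 1) → X) → ℝ) : ℝ :=
  ∑ x : Fin (T + 1) → X, trajProb μ q T x * f x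

/-- `q` is a policy sequence for horizon `T`: for each `t < T` (our index `t`
stands for `t-1` with `1 ≤ t ≤ T`), `q t x ·` is a probability mass function. -/
def IsPolicy {X : Type*} [Fintype X] (T : ℕ) (q : ℕ → X → X → ℝ) : Prop :=
  ∀ t < T, ∀ x : X, (∀ y : X, 0 ≤ q t x y) ∧ (∑ y, q t x y) = 1

/-- A policy sequence is positive if all its transition probabilities are positive. -/
def IsPositive {X : Type*} (T : ℕ) (q : ℕ → X → X → ℝ) : Prop :=
  ∀ t < T, ∀ x y : X, 0 < q t x y

/-! `p*_{t-1}(·|x)` is `p^pre_{t-1}(·|x)` tilted by `exp((v_{t-1}(y) - v_t(x))/α)`, so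
`α KL(p^θ ‖ p*) = α KL(p^θ ‖ p^pre) + v_t(x_t) - E_{y ∼ p^θ_{t-1}(·|x_t)} v_{t-1}(y)`.
Taking expectations under `P^{p^θ}_μ`, the last term becomes `E[v_{t-1}(x_{t-1})]`, so the gaps
telescope over `t` to `E[v_T(x_T)] - E[r(x_0)]`, and `x_T ∼ μ`. -/

section KL

variable {Y : Type*} [Fintype Y]

lemma KLd_mul_right (p q w : Y → ℝ) (hq : ∀ y, q y ≠ 0) (hw : ∀ y, w y ≠ 0) :
    KLd p (fun y => q y * w y) = KLd p q - ∑ y, p y * Real.log (w y) := by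
  unfold KLd
  rw [← Finset.sum_sub_distrib]
  refine Finset.sum_congr rfl fun y _ => ?_
  by_cases hp : p y = 0
  · simp [hp]
  · rw [← div_div, Real.log_div (div_ne_zero hp (hq y)) (hw y), mul_sub]

lemma KLd_mul_exp (p q a : Y → ℝ) {α : ℝ} (hα : α ≠ 0) (c : ℝ) (hq : ∀ y, q y ≠ 0)
    (hp : ∑ y, p y = 1) :
    α * KLd p (fun y => q y * Real.exp ((a y - c) / α))
      = α * KLd p q + (c - ∑ y, p y * a y) := by
  have hmean : ∑ y, p y * ((a y - c) / α) = (∑ y, p y * a y - c) / α := by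
    simp only [mul_div_assoc', mul_sub, ← Finset.sum_div, Finset.sum_sub_distrib,
      ← Finset.sum_mul, hp, one_mul]
  rw [KLd_mul_right p q _ hq fun y => Real.exp_ne_zero _]
  simp only [Real.log_exp, hmean]
  field_simp
  ring

end KL

lemma softOpt_eq {X : Type*} [Fintype X] (p : ℕ → X → X → ℝ) (r : X → ℝ) (α : ℝ) (t : ℕ)
    (x y : X) :
    softOpt p r α t x y
      = p t x y * Real.exp ((softValue p r α t y - softValue p r α (t + 1) x) / α) := by
  rw [softOpt, mul_div_assoc, sub_div, Real.exp_sub]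

lemma Fin.sum_succ_sub_castSucc {M : Type*} [AddCommGroup M] {n : ℕ} (f : Fin (n + 1) → M) :
    ∑ i : Fin n, (f i.succ - f i.castSucc) = f (Fin.last n) - f 0 := by
  have h := (Fin.sum_univ_succ f).symm.trans (Fin.sum_univ_castSucc f)
  rw [Finset.sum_sub_distrib, sub_eq_sub_iff_add_eq_add, add_comm, h, add_comm]

lemma sum_fin_succ_pi {X M : Type*} [Fintype X] [AddCommMonoid M] {n : ℕ}
    (F : (Fin (n + 1) → X) → M) :
    ∑ x, F x = ∑ v : X, ∑ w : Fin n → X, F (Fin.cons v w) := by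
  rw [← (Fin.consEquiv fun _ : Fin (n + 1) => X).sum_comp F, Fintype.sum_prod_type]
  rfl

lemma trajProb_cons {X : Type*} {n : ℕ} (μ : X → ℝ) (q : ℕ → X → X → ℝ) (v : X)
    (w : Fin (n + 1) → X) :
    trajProb μ q (n + 1) (Fin.cons v w)
      = trajProb μ (fun s => q (s + 1)) n w * q 0 (w 0) v := by
  simp only [trajProb, Fin.prod_univ_succ, Fin.cons_last, Fin.castSucc_zero, Fin.cons_zero,
    Fin.val_zero, Fin.val_succ, Fin.cons_succ, Fin.castSucc_succ]
  ring

section Trajectory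

variable {X : Type*} [Fintype X]

lemma trajExp_add {n : ℕ} (μ : X → ℝ) (q : ℕ → X → X → ℝ) (f g : (Fin (n + 1) → X) → ℝ) :
    trajExp μ q n (fun x => f x + g x) = trajExp μ q n f + trajExp μ q n g := by
  simp only [trajExp, mul_add, Finset.sum_add_distrib]

lemma trajExp_sub {n : ℕ} (μ : X → ℝ) (q : ℕ → X → X → ℝ) (f g : (Fin (n + 1) → X) → ℝ) :
    trajExp μ q n (fun x => f x - g x) = trajExp μ q n f - trajExp μ q n g := by
  simp only [trajExp, mul_sub, Finset.sum_sub_distrib]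

lemma trajExp_const_mul {n : ℕ} (μ : X → ℝ) (q : ℕ → X → X → ℝ) (c : ℝ)
    (f : (Fin (n + 1) → X) → ℝ) :
    trajExp μ q n (fun x => c * f x) = c * trajExp μ q n f := by
  simp only [trajExp, Finset.mul_sum, mul_left_comm]

/-- Integrating out the final state `x_0`. -/
lemma trajExp_succ {n : ℕ} (μ : X → ℝ) (q : ℕ → X → X → ℝ) (f : (Fin (n + 2) → X) → ℝ) :
    trajExp μ q (n + 1) f
      = trajExp μ (fun s => q (s + 1)) n (fun w => ∑ v, q 0 (w 0) v * f (Fin.cons v w)) := by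
  simp only [trajExp]
  rw [sum_fin_succ_pi, Finset.sum_comm]
  refine Finset.sum_congr rfl fun w _ => ?_
  simp only [trajProb_cons, Finset.mul_sum, mul_assoc]

lemma IsPolicy.shift {n : ℕ} {q : ℕ → X → X → ℝ} (hq : IsPolicy (n + 1) q) :
    IsPolicy n (fun s => q (s + 1)) :=
  fun t ht x => hq (t + 1) (by omega) x

lemma IsPolicy.sum_mul_const {n : ℕ} {q : ℕ → X → X → ℝ} (hq : IsPolicy (n + 1) q) (x : X)
    (c : ℝ) : ∑ v, q 0 x v * c = c := by
  rw [← Finset.sum_mul, (hq 0 (by omega) x).2, one_mul]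

lemma trajExp_comp_tail {n : ℕ} (μ : X → ℝ) {q : ℕ → X → X → ℝ} (hq : IsPolicy (n + 1) q)
    (f : (Fin (n + 1) → X) → ℝ) :
    trajExp μ q (n + 1) (fun x => f (Fin.tail x)) = trajExp μ (fun s => q (s + 1)) n f := by
  rw [trajExp_succ]
  simp only [Fin.tail_cons, hq.sum_mul_const]

lemma trajExp_last {n : ℕ} (μ : X → ℝ) {q : ℕ → X → X → ℝ} (hq : IsPolicy n q) (g : X → ℝ) :
    trajExp μ q n (fun x => g (x (Fin.last n))) = ∑ z, μ z * g z := by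
  induction n generalizing q with
  | zero =>
    rw [trajExp, ← (Equiv.funUnique (Fin 1) X).symm.sum_comp]
    simp [trajProb]
  | succ n ih => exact (trajExp_comp_tail μ hq fun w => g (w (Fin.last n))).trans (ih hq.shift)

/-- Under `P^q_μ`, the law of `x_t` given `x_{t+1}` is `q_t(·|x_{t+1})`. -/
lemma trajExp_step {n : ℕ} (μ : X → ℝ) {q : ℕ → X → X → ℝ} (hq : IsPolicy n q) (t : Fin n)
    (ψ : X → X → ℝ) :
    trajExp μ q n (fun x => ψ (x t.succ) (x t.castSucc))
      = trajExp μ q n (fun x => ∑ z, q t (x t.succ) z * ψ (x t.succ) z) := by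
  induction n generalizing q with
  | zero => exact t.elim0
  | succ n ih =>
    cases t using Fin.cases with
    | zero =>
      rw [trajExp_succ, trajExp_succ]
      simp only [Fin.cons_succ, Fin.castSucc_zero, Fin.cons_zero, Fin.val_zero, hq.sum_mul_const]
    | succ j =>
      exact (trajExp_comp_tail μ hq fun w => ψ (w j.succ) (w j.castSucc)).trans
        ((ih hq.shift j).trans (trajExp_comp_tail μ hq _).symm)

end Trajectory

lemma trajExp_KLd_softOpt {X : Type*} [Fintype X] {T : ℕ} (r : X → ℝ) {α : ℝ} (hα : α ≠ 0)
    {ppre : ℕ → X → X → ℝ} (hpre : IsPositive T ppre) {q : ℕ → X → X → ℝ} (hq : IsPolicy T q)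
    (μ : X → ℝ) (t : Fin T) :
    α * trajExp μ q T (fun x =>
        KLd (fun y => q t (x t.succ) y) (fun y => softOpt ppre r α t (x t.succ) y))
      = α * trajExp μ q T (fun x =>
          KLd (fun y => q t (x t.succ) y) (fun y => ppre t (x t.succ) y))
        + (trajExp μ q T (fun x => softValue ppre r α (t + 1) (x t.succ))
          - trajExp μ q T (fun x => softValue ppre r α t (x t.castSucc))) := by
  rw [trajExp_step μ hq t fun _ y => softValue ppre r α t y, ← trajExp_const_mul,
    ← trajExp_const_mul, ← trajExp_sub, ← trajExp_add]
  congr 1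
  funext x
  simp only [softOpt_eq]
  exact KLd_mul_exp _ _ _ hα _ (fun y => (hpre t t.2 _ y).ne') (hq t t.2 _).2

theorem statement0_general {X : Type*} [Fintype X]
    (T : ℕ) (r : X → ℝ) (α : ℝ) (hα : 0 < α)
    (ppre : ℕ → X → X → ℝ) (hprePos : IsPositive T ppre)
    (pθ : ℕ → X → X → ℝ) (hθ : IsPolicy T pθ)
    (μ : X → ℝ) :
    trajExp μ pθ T (fun x => r (x 0))
        - α * ∑ t : Fin T, trajExp μ pθ T (fun x =>
            KLd (fun y => pθ t (x t.succ) y) (fun y => ppre t (x t.succ) y))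
      = (∑ x, μ x * softValue ppre r α T x)
        - α * ∑ t : Fin T, trajExp μ pθ T (fun x =>
            KLd (fun y => pθ t (x t.succ) y) (fun y => softOpt ppre r α t (x t.succ) y)) := by
  have htelescope : ∑ t : Fin T, (trajExp μ pθ T (fun x => softValue ppre r α (t + 1) (x t.succ))
        - trajExp μ pθ T (fun x => softValue ppre r α t (x t.castSucc)))
      = (∑ x, μ x * softValue ppre r α T x) - trajExp μ pθ T (fun x => r (x 0)) := by
    refine (Fin.sum_succ_sub_castSucc fun i =>
      trajExp μ pθ T fun x => softValue ppre r α i (x i)).trans ?_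
    rw [Fin.val_last, trajExp_last μ hθ]
    rfl
  rw [Finset.mul_sum, Finset.mul_sum,
    Finset.sum_congr rfl fun t _ => trajExp_KLd_softOpt r hα.ne' hprePos hθ μ t,
    Finset.sum_add_distrib, htelescope]
  ring

/-- the entropy-regularized objective `J(p^θ)` equals
`∑_{x_T} μ(x_T) v_T(x_T)` minus `α` times the sum of expected per-step reverse KL
divergences to the soft-optimal policy: maximizing the PPO objective is equivalent,
up to an additive constant independent of `p^θ`, to minimizing the expected
per-step reverse KL divergence to the soft-optimal policy. -/
theorem statement0 {X : Type*} [Fintype X] [Nonempty X]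
    (T : ℕ) (hT : 1 ≤ T) (r : X → ℝ) (α : ℝ) (hα : 0 < α)
    (ppre : ℕ → X → X → ℝ) (hpre : IsPolicy T ppre) (hprePos : IsPositive T ppre)
    (pθ : ℕ → X → X → ℝ) (hθ : IsPolicy T pθ) (hθPos : IsPositive T pθ)
    (μ : X → ℝ) (hμ0 : ∀ x, 0 ≤ μ x) (hμ1 : (∑ x, μ x) = 1) :
    trajExp μ pθ T (fun x => r (x 0))
        - α * ∑ t : Fin T, trajExp μ pθ T (fun x =>
            KLd (fun y => pθ t (x t.succ) y) (fun y => ppre t (x t.succ) y))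
      = (∑ x, μ x * softValue ppre r α T x)
        - α * ∑ t : Fin T, trajExp μ pθ T (fun x =>
            KLd (fun y => pθ t (x t.succ) y) (fun y => softOpt ppre r α t (x t.succ) y)) :=
  statement0_general T r α hα ppre hprePos pθ hθ μ
end

section
/- Let X be a nonempty finite type, 1 ≤ t ≤ T, r : X → ℝ, α > 0, and p^pre a positive pretrained policy sequence with soft value functions v_t and soft-optimal policy sequence p*. Then for every probability mass function p(·) on X that is positive (playing the role of p^θ_{t-1}(·|x_t)) and every x ∈ X: α · KL(p ‖ p*_{t-1}(·|x)) = α · KL(p ‖ p^pre_{t-1}(·|x)) + v_t(x) − Σ_y p(y) v_{t-1}(y). -/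
open Real

/-- for `1 ≤ t ≤ T`, any positive pmf `p` (the student policy
`p^θ_{t-1}(·|x_t)`) and any `x`:
`α·KL(p ‖ p*_{t-1}(·|x)) = α·KL(p ‖ p^pre_{t-1}(·|x)) + v_t(x) − ∑_y p(y) v_{t-1}(y)`.
(Our index `t - 1` stands for the paper's `t-1`.) -/
theorem statement2 {X : Type*} [Fintype X] [Nonempty X]
    (T : ℕ) (hT : 1 ≤ T) (t : ℕ) (ht1 : 1 ≤ t) (htT : t ≤ T)
    (r : X → ℝ) (α : ℝ) (hα : 0 < α)
    (ppre : ℕ → X → X → ℝ) (hpre : IsPolicy T ppre) (hprePos : IsPositive T ppre)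
    (p : X → ℝ) (hp0 : ∀ y, 0 < p y) (hp1 : (∑ y, p y) = 1) (x : X) :
    α * KLd p (fun y => softOpt ppre r α (t - 1) x y)
      = α * KLd p (fun y => ppre (t - 1) x y)
        + softValue ppre r α t x
        - ∑ y, p y * softValue ppre r α (t - 1) y := by
  have htt : t - 1 + 1 = t := by omega
  have key : ∀ y : X, α * (p y * Real.log (p y / softOpt ppre r α (t - 1) x y))
      = α * (p y * Real.log (p y / ppre (t - 1) x y))
        + p y * softValue ppre r α t x - p y * softValue ppre r α (t - 1) y := by
    intro y
    have hppre : 0 < ppre (t - 1) x y := hprePos (t - 1) (by omega) x y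
    have hpy := hp0 y
    have h1 := Real.exp_pos (softValue ppre r α (t - 1) y / α)
    have h2 := Real.exp_pos (softValue ppre r α t x / α)
    rw [softOpt, htt]
    rw [Real.log_div hpy.ne' (by positivity),
        Real.log_div (by positivity) h2.ne',
        Real.log_mul hppre.ne' h1.ne', Real.log_exp, Real.log_exp,
        Real.log_div hpy.ne' hppre.ne']
    field_simp
    ring
  unfold KLd
  rw [Finset.mul_sum, Finset.mul_sum]
  rw [Finset.sum_congr rfl fun y _ => key y]
  rw [Finset.sum_sub_distrib, Finset.sum_add_distrib, ← Finset.sum_mul, hp1, one_mul]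
end

section
/- Let X be a nonempty finite type, T ≥ 1, r : X → ℝ, α > 0, and p^pre a positive pretrained policy sequence with soft value functions v_t and soft-optimal policy sequence p*. Then for every trajectory (x_T, x_{T-1}, …, x_0) ∈ X^{T+1}, the transition probabilities telescope: Π_{t=T}^{1} p*_{t-1}(x_{t-1}|x_t) = exp((r(x_0) − v_T(x_T))/α) · Π_{t=T}^{1} p^pre_{t-1}(x_{t-1}|x_t); that is, the soft-optimal trajectory distribution is the pretrained trajectory distribution exponentially tilted by the reward of the endpoint and normalized by exp(v_T(x_T)/α). -/
open Real

/-- along every trajectory `(x_T, …, x_0)`, the soft-optimal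
transition probabilities telescope:
`∏_{t=T}^1 p*_{t-1}(x_{t-1}|x_t) = exp((r(x_0) − v_T(x_T))/α) · ∏_{t=T}^1 p^pre_{t-1}(x_{t-1}|x_t)`. -/
theorem statement6 {X : Type*} [Fintype X] [Nonempty X]
    (T : ℕ) (hT : 1 ≤ T) (r : X → ℝ) (α : ℝ) (hα : 0 < α)
    (ppre : ℕ → X → X → ℝ) (hpre : IsPolicy T ppre) (hprePos : IsPositive T ppre) :
    ∀ x : Fin (T + 1) → X,
      (∏ t : Fin T, softOpt ppre r α t (x t.succ) (x t.castSucc))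
        = Real.exp ((r (x 0) - softValue ppre r α T (x (Fin.last T))) / α)
          * ∏ t : Fin T, ppre t (x t.succ) (x t.castSucc) := by
  intro x
  set g : ℕ → ℝ := fun n =>
    if h : n < T + 1 then softValue ppre r α n (x ⟨n, h⟩) / α else 0 with hg
  have key : ∀ t : Fin T, softOpt ppre r α t (x t.succ) (x t.castSucc)
      = ppre t (x t.succ) (x t.castSucc) * Real.exp (g t - g (t + 1)) := by
    intro t
    have h1 : (t : ℕ) < T + 1 := Nat.lt_succ_of_lt t.isLt
    have h2 : (t : ℕ) + 1 < T + 1 := Nat.succ_lt_succ t.isLt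
    have e1 : x ⟨(t : ℕ), h1⟩ = x t.castSucc := rfl
    have e2 : x ⟨(t : ℕ) + 1, h2⟩ = x t.succ := rfl
    simp only [hg, dif_pos h1, dif_pos h2, e1, e2, softOpt, Real.exp_sub]
    ring
  rw [Finset.prod_congr rfl (fun t _ => key t), Finset.prod_mul_distrib,
    ← Real.exp_sum]
  have tele : ∑ t : Fin T, (g t - g (t + 1)) = g 0 - g T := by
    rw [Fin.sum_univ_eq_sum_range (fun i => g i - g (i + 1))]
    exact Finset.sum_range_sub' g T
  have hg0 : g 0 = r (x 0) / α := by
    simp [hg, softValue]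
  have hgT : g T = softValue ppre r α T (x (Fin.last T)) / α := by
    have h : T < T + 1 := Nat.lt_succ_self T
    simp only [hg, dif_pos h]
    rfl
  rw [tele, hg0, hgT, ← sub_div, mul_comm]
end

section
/- Let X be a nonempty finite type, T ≥ 1, r : X → ℝ, α > 0, and p^pre a positive pretrained policy sequence with soft value functions v_t and soft-optimal policy sequence p*. Fix an initial state z ∈ X. Then the marginal distribution of the final state x_0 of the chain run backwards from x_T = z under the soft-optimal policies equals the reward-tilted pretrained marginal: for every x_0 ∈ X, Σ_{x_{T-1},…,x_1} Π_{t=T}^{1} p*_{t-1}(x_{t-1}|x_t) = exp((r(x_0) − v_T(z))/α) · Σ_{x_{T-1},…,x_1} Π_{t=T}^{1} p^pre_{t-1}(x_{t-1}|x_t), i.e., it is proportional to exp(r(x_0)/α) · p^pre(x_0 | x_T = z) with normalizing constant exp(v_T(z)/α). -/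
open Real

/-- marginal of the final state under the soft-optimal chain started
at `x_T = z` is the reward-tilted pretrained marginal: for every `x0`,
`∑_{x_{T-1},…,x_1} ∏_t p*_{t-1}(x_{t-1}|x_t) = exp((r(x0) − v_T(z))/α) · ∑_{x_{T-1},…,x_1} ∏_t p^pre_{t-1}(x_{t-1}|x_t)`,
both sums being over trajectories with fixed endpoints `x_T = z` and `x_0 = x0`. -/
theorem statement7 {X : Type*} [Fintype X] [Nonempty X] [DecidableEq X]
    (T : ℕ) (hT : 1 ≤ T) (r : X → ℝ) (α : ℝ) (hα : 0 < α)
    (ppre : ℕ → X → X → ℝ) (hpre : IsPolicy T ppre) (hprePos : IsPositive T ppre)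
    (z : X) :
    ∀ x0 : X,
      (∑ x ∈ Finset.univ.filter
          (fun x : Fin (T + 1) → X => x (Fin.last T) = z ∧ x 0 = x0),
          ∏ t : Fin T, softOpt ppre r α t (x t.succ) (x t.castSucc))
        = Real.exp ((r x0 - softValue ppre r α T z) / α)
          * ∑ x ∈ Finset.univ.filter
              (fun x : Fin (T + 1) → X => x (Fin.last T) = z ∧ x 0 = x0),
              ∏ t : Fin T, ppre t (x t.succ) (x t.castSucc) := by
  intro x0
  rw [Finset.mul_sum]
  apply Finset.sum_congr rfl
  intro x hx
  simp only [Finset.mem_filter, Finset.mem_univ, true_and] at hx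
  obtain ⟨hz, h0⟩ := hx
  have key : ∀ t : Fin T, softOpt ppre r α t (x t.succ) (x t.castSucc)
      = ppre t (x t.succ) (x t.castSucc)
        * Real.exp ((softValue ppre r α t (x t.castSucc)
            - softValue ppre r α (t + 1) (x t.succ)) / α) := by
    intro t
    rw [softOpt, sub_div, Real.exp_sub]
    ring
  simp only [key]
  rw [Finset.prod_mul_distrib, ← Real.exp_sum]
  set G : ℕ → ℝ := fun n =>
    softValue ppre r α n (x ⟨n % (T + 1), Nat.mod_lt _ (Nat.succ_pos T)⟩) with hG
  have hsum : ∑ t : Fin T, (softValue ppre r α t (x t.castSucc)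
      - softValue ppre r α (t + 1) (x t.succ)) / α = (G 0 - G T) / α := by
    rw [← Finset.sum_div]
    congr 1
    have hterm : ∀ t : Fin T, softValue ppre r α t (x t.castSucc)
        - softValue ppre r α (t + 1) (x t.succ) = G t - G (t + 1) := by
      intro t
      have h1 : x t.castSucc = x ⟨(t : ℕ) % (T + 1), Nat.mod_lt _ (Nat.succ_pos T)⟩ := by
        congr 1
        exact Fin.ext (by simp [Nat.mod_eq_of_lt (t.2.trans (Nat.lt_succ_self T))])
      have h2 : x t.succ = x ⟨((t : ℕ) + 1) % (T + 1), Nat.mod_lt _ (Nat.succ_pos T)⟩ := by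
        congr 1
        exact Fin.ext (by simp [Nat.mod_eq_of_lt (Nat.succ_lt_succ t.2)])
      rw [hG]; dsimp only; rw [h1, h2]
    simp only [hterm]
    rw [Fin.sum_univ_eq_sum_range (fun n => G n - G (n + 1)), Finset.sum_range_sub' G]
  rw [hsum]
  have hG0 : G 0 = r x0 := by
    rw [hG]
    have : (⟨0 % (T + 1), Nat.mod_lt _ (Nat.succ_pos T)⟩ : Fin (T + 1)) = 0 :=
      Fin.ext (by simp)
    dsimp only
    rw [this, h0]
    rfl
  have hGT : G T = softValue ppre r α T z := by
    rw [hG]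
    have : (⟨T % (T + 1), Nat.mod_lt _ (Nat.succ_pos T)⟩ : Fin (T + 1)) = Fin.last T :=
      Fin.ext (by simp [Nat.mod_eq_of_lt (Nat.lt_succ_self T)])
    dsimp only
    rw [this, hz]
  rw [hG0, hGT, mul_comm]
end

section
/- Let X be a nonempty finite type, p^pre a positive probability mass function on X, r : X → ℝ, and α > 0. Then for every probability mass function q on X, E_q[r] − α · KL(q ‖ p^pre) ≤ α · log Σ_x p^pre(x) exp(r(x)/α), and equality holds for the exponentially tilted distribution q*(x) = p^pre(x) exp(r(x)/α) / Σ_y p^pre(y) exp(r(y)/α). -/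
open Real

/-! With `Z = ∑ p e^{r/α}` and the tilt `q* = p e^{r/α} / Z`, every `q` of total mass one
satisfies `E_q[r] - α KL(q ‖ p) = α log Z - α KL(q ‖ q*)`: pointwise, `log (q / p) - r / α`
equals `log (q / q*) - log Z`. Gibbs' inequality `KL(q ‖ q*) ≥ 0` gives the bound, and
`KL(q* ‖ q*) = 0` the equality. -/

lemma sub_le_mul_log_div {a b : ℝ} (ha : 0 ≤ a) (hb : 0 < b) : a - b ≤ a * Real.log (a / b) := by
  rcases ha.eq_or_lt with rfl | ha
  · simpa using hb.le
  · calc a - b = a * (1 - (a / b)⁻¹) := by field_simp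
      _ ≤ a * Real.log (a / b) :=
        mul_le_mul_of_nonneg_left (Real.one_sub_inv_le_log_of_pos (div_pos ha hb)) ha.le

section KLd

variable {Y : Type*} [Fintype Y]

lemma KLd_nonneg {p q : Y → ℝ} (hp : ∀ y, 0 ≤ p y) (hq : ∀ y, 0 < q y)
    (hpq : ∑ y, q y ≤ ∑ y, p y) : 0 ≤ KLd p q :=
  calc 0 ≤ ∑ y, (p y - q y) := by rw [Finset.sum_sub_distrib]; linarith
    _ ≤ KLd p q := Finset.sum_le_sum fun y _ => sub_le_mul_log_div (hp y) (hq y)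

lemma KLd_self (p : Y → ℝ) : KLd p p = 0 :=
  Finset.sum_eq_zero fun y _ => by
    rcases eq_or_ne (p y) 0 with h | h <;> simp [h]

end KLd

section GibbsTilt

variable {X : Type*} [Fintype X]

noncomputable def partitionFn (p r : X → ℝ) (α : ℝ) : ℝ :=
  ∑ x, p x * Real.exp (r x / α)

noncomputable def gibbsTilt (p r : X → ℝ) (α : ℝ) (x : X) : ℝ :=
  p x * Real.exp (r x / α) / partitionFn p r α

lemma partitionFn_pos [Nonempty X] {p : X → ℝ} (hp : ∀ x, 0 < p x) (r : X → ℝ) (α : ℝ) :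
    0 < partitionFn p r α :=
  Finset.sum_pos (fun x _ => mul_pos (hp x) (Real.exp_pos _)) Finset.univ_nonempty

lemma gibbsTilt_pos [Nonempty X] {p : X → ℝ} (hp : ∀ x, 0 < p x) (r : X → ℝ) (α : ℝ)
    (x : X) : 0 < gibbsTilt p r α x :=
  div_pos (mul_pos (hp x) (Real.exp_pos _)) (partitionFn_pos hp r α)

lemma sum_gibbsTilt {p r : X → ℝ} {α : ℝ} (hZ : partitionFn p r α ≠ 0) :
    ∑ x, gibbsTilt p r α x = 1 := by
  unfold gibbsTilt
  rw [← Finset.sum_div, ← partitionFn, div_self hZ]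

lemma sum_mul_sub_mul_KLd_eq {p r : X → ℝ} {α : ℝ} (hp : ∀ x, p x ≠ 0) (hα : α ≠ 0)
    (hZ : partitionFn p r α ≠ 0) {q : X → ℝ} (hq : ∑ x, q x = 1) :
    (∑ x, q x * r x) - α * KLd q p
      = α * Real.log (partitionFn p r α) - α * KLd q (gibbsTilt p r α) := by
  have hterm : ∀ x, q x * r x - α * (q x * Real.log (q x / p x))
      = α * Real.log (partitionFn p r α) * q x
        - α * (q x * Real.log (q x / gibbsTilt p r α x)) := by
    intro x
    rcases eq_or_ne (q x) 0 with h | h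
    · simp [h]
    · have hw : p x * Real.exp (r x / α) ≠ 0 := mul_ne_zero (hp x) (Real.exp_ne_zero _)
      rw [gibbsTilt, Real.log_div h (hp x), Real.log_div h (div_ne_zero hw hZ),
        Real.log_div hw hZ, Real.log_mul (hp x) (Real.exp_ne_zero _),
        Real.log_exp]
      field_simp
      ring
  rw [KLd, KLd, Finset.mul_sum, Finset.mul_sum, ← Finset.sum_sub_distrib,
    Finset.sum_congr rfl fun x _ => hterm x, Finset.sum_sub_distrib, ← Finset.mul_sum, hq,
    mul_one]

end GibbsTilt

theorem statement8_general {X : Type*} [Fintype X] [Nonempty X]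
    (ppre : X → ℝ) (hppos : ∀ x, 0 < ppre x)
    (r : X → ℝ) (α : ℝ) (hα : 0 < α) :
    (∀ q : X → ℝ, (∀ x, 0 ≤ q x) → (∑ x, q x) = 1 →
        (∑ x, q x * r x) - α * KLd q ppre
          ≤ α * Real.log (∑ x, ppre x * Real.exp (r x / α)))
    ∧ ((∑ x, (ppre x * Real.exp (r x / α) / ∑ y, ppre y * Real.exp (r y / α)) * r x)
          - α * KLd
              (fun x => ppre x * Real.exp (r x / α) / ∑ y, ppre y * Real.exp (r y / α))
              ppre
        = α * Real.log (∑ x, ppre x * Real.exp (r x / α))) := by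
  have hp : ∀ x, ppre x ≠ 0 := fun x => (hppos x).ne'
  have hZ : partitionFn ppre r α ≠ 0 := (partitionFn_pos hppos r α).ne'
  refine ⟨fun q hq hqsum => ?_, ?_⟩
  · have hKL : 0 ≤ KLd q (gibbsTilt ppre r α) :=
      KLd_nonneg hq (gibbsTilt_pos hppos r α) (by rw [hqsum, sum_gibbsTilt hZ])
    rw [sum_mul_sub_mul_KLd_eq hp hα.ne' hZ hqsum]
    exact sub_le_self _ (mul_nonneg hα.le hKL)
  · have htilt := sum_mul_sub_mul_KLd_eq hp hα.ne' hZ (sum_gibbsTilt hZ)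
    rwa [KLd_self, mul_zero, sub_zero] at htilt

/-- single-step Gibbs variational bound: for every pmf `q`,
`E_q[r] − α·KL(q ‖ p^pre) ≤ α · log ∑_x p^pre(x) exp(r(x)/α)`, with equality for
the exponentially tilted distribution `q*(x) = p^pre(x) exp(r(x)/α) / ∑_y p^pre(y) exp(r(y)/α)`. -/
theorem statement8 {X : Type*} [Fintype X] [Nonempty X]
    (ppre : X → ℝ) (hppos : ∀ x, 0 < ppre x) (hpsum : (∑ x, ppre x) = 1)
    (r : X → ℝ) (α : ℝ) (hα : 0 < α) :
    (∀ q : X → ℝ, (∀ x, 0 ≤ q x) → (∑ x, q x) = 1 →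
        (∑ x, q x * r x) - α * KLd q ppre
          ≤ α * Real.log (∑ x, ppre x * Real.exp (r x / α)))
    ∧ ((∑ x, (ppre x * Real.exp (r x / α) / ∑ y, ppre y * Real.exp (r y / α)) * r x)
          - α * KLd
              (fun x => ppre x * Real.exp (r x / α) / ∑ y, ppre y * Real.exp (r y / α))
              ppre
        = α * Real.log (∑ x, ppre x * Real.exp (r x / α))) :=
  statement8_general ppre hppos r α hα
end

section
/- Let X be a nonempty finite type, T ≥ 1, r : X → ℝ, α > 0, and p^pre a positive pretrained policy sequence with soft value functions v_t and soft-optimal policy sequence p*. Fix roll-in distributions u_t on X for t = 1, …, T. Define, for a positive policy sequence p^θ, the distillation loss L(p^θ) := Σ_{t=1}^{T} Σ_x u_t(x) · KL(p*_{t-1}(·|x) ‖ p^θ_{t-1}(·|x)) and the value-weighted log-likelihood objective M(p^θ) := Σ_{t=1}^{T} Σ_x u_t(x) · exp(−v_t(x)/α) · Σ_y p^pre_{t-1}(y|x) exp(v_{t-1}(y)/α) log p^θ_{t-1}(y|x). Then L(p^θ) + M(p^θ) = Σ_{t=1}^{T} Σ_x u_t(x) Σ_y p*_{t-1}(y|x)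 log p*_{t-1}(y|x), a quantity independent of p^θ; consequently, a positive policy sequence minimizes L over any given family of positive policy sequences if and only if it maximizes M over that family. -/
open Real

/-- The distillation loss
`L(p^θ) = ∑_{t=1}^T ∑_x u_t(x) KL(p*_{t-1}(·|x) ‖ p^θ_{t-1}(·|x))`
(our index `t : Fin T` stands for the paper's `t-1`,
`u t` being the roll-in distribution at the paper's time `t+1`). -/
noncomputable def Lloss {X : Type*} [Fintype X] (T : ℕ) (u : ℕ → X → ℝ)
    (ppre : ℕ → X → X → ℝ) (r : X → ℝ) (α : ℝ) (pθ : ℕ → X → X → ℝ) : ℝ :=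
  ∑ t : Fin T, ∑ x, u t x
    * KLd (fun y => softOpt ppre r α t x y) (fun y => pθ t x y)

/-- The value-weighted log-likelihood objective
`M(p^θ) = ∑_{t=1}^T ∑_x u_t(x) exp(−v_t(x)/α) ∑_y p^pre_{t-1}(y|x) exp(v_{t-1}(y)/α) log p^θ_{t-1}(y|x)`. -/
noncomputable def Mobj {X : Type*} [Fintype X] (T : ℕ) (u : ℕ → X → ℝ)
    (ppre : ℕ → X → X → ℝ) (r : X → ℝ) (α : ℝ) (pθ : ℕ → X → X → ℝ) : ℝ :=
  ∑ t : Fin T, ∑ x, u t x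
    * (Real.exp (-(softValue ppre r α ((t : ℕ) + 1) x) / α)
        * ∑ y, ppre t x y * Real.exp (softValue ppre r α t y / α)
            * Real.log (pθ t x y))

/-- `L(p^θ) + M(p^θ)` equals
`∑_{t=1}^T ∑_x u_t(x) ∑_y p*_{t-1}(y|x) log p*_{t-1}(y|x)`, a quantity independent
of `p^θ`; consequently, over any family of positive policy sequences, `p^θ`
minimizes `L` if and only if it maximizes `M`. -/
theorem statement12 {X : Type*} [Fintype X] [Nonempty X]
    (T : ℕ) (hT : 1 ≤ T) (r : X → ℝ) (α : ℝ) (hα : 0 < α)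
    (ppre : ℕ → X → X → ℝ) (hpre : IsPolicy T ppre) (hprePos : IsPositive T ppre)
    (u : ℕ → X → ℝ) (hu : ∀ t < T, (∀ x : X, 0 ≤ u t x) ∧ (∑ x, u t x) = 1) :
    (∀ pθ : ℕ → X → X → ℝ, IsPolicy T pθ → IsPositive T pθ →
        Lloss T u ppre r α pθ + Mobj T u ppre r α pθ
          = ∑ t : Fin T, ∑ x, u t x
              * ∑ y, softOpt ppre r α t x y * Real.log (softOpt ppre r α t x y))
    ∧ (∀ F : Set (ℕ → X → X → ℝ),
        (∀ p ∈ F, IsPolicy T p ∧ IsPositive T p) →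
        ∀ p ∈ F,
          ((∀ p' ∈ F, Lloss T u ppre r α p ≤ Lloss T u ppre r α p')
            ↔ (∀ p' ∈ F, Mobj T u ppre r α p' ≤ Mobj T u ppre r α p))) := by
  have key : ∀ pθ : ℕ → X → X → ℝ, IsPositive T pθ →
      Lloss T u ppre r α pθ + Mobj T u ppre r α pθ
        = ∑ t : Fin T, ∑ x, u t x
            * ∑ y, softOpt ppre r α t x y * Real.log (softOpt ppre r α t x y) := by
    intro pθ hθ
    unfold Lloss Mobj
    rw [← Finset.sum_add_distrib]
    refine Finset.sum_congr rfl ?_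
    intro t _
    rw [← Finset.sum_add_distrib]
    refine Finset.sum_congr rfl ?_
    intro x _
    rw [← mul_add]
    congr 1
    have hopt : ∀ y, softOpt ppre r α t x y
        = Real.exp (-(softValue ppre r α ((t : ℕ) + 1) x) / α)
          * (ppre t x y * Real.exp (softValue ppre r α t y / α)) := by
      intro y
      unfold softOpt
      rw [neg_div, Real.exp_neg]
      field_simp
    have hoptpos : ∀ y, 0 < softOpt ppre r α t x y := by
      intro y
      rw [hopt y]
      have h1 := hprePos t t.isLt x y
      positivity
    unfold KLd
    rw [Finset.mul_sum, ← Finset.sum_add_distrib]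
    rw [show (∑ y, softOpt ppre r α t x y * Real.log (softOpt ppre r α t x y))
        = ∑ y, (softOpt ppre r α t x y * Real.log (softOpt ppre r α t x y)) from rfl]
    refine Finset.sum_congr rfl ?_
    intro y _
    have hθpos : 0 < pθ t x y := hθ t t.isLt x y
    rw [Real.log_div (ne_of_gt (hoptpos y)) (ne_of_gt hθpos)]
    have : Real.exp (-(softValue ppre r α ((t : ℕ) + 1) x) / α)
        * (ppre t x y * Real.exp (softValue ppre r α t y / α) * Real.log (pθ t x y))
        = softOpt ppre r α t x y * Real.log (pθ t x y) := by
      rw [hopt y]; ring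
    rw [this]; ring
  constructor
  · intro pθ _ hpos; exact key pθ hpos
  · intro F hF p hp
    have hC := key p (hF p hp).2
    constructor
    · intro h p' hp'
      have := key p' (hF p' hp').2
      have := h p' hp'
      linarith
    · intro h p' hp'
      have := key p' (hF p' hp').2
      have := h p' hp'
      linarith
end

section
/- Let X be a nonempty finite type, T ≥ 1, r : X → ℝ a reward, μ an initial distribution on X, and d ≥ 1. Suppose for each t = 1, …, T and each x, y ∈ X the map θ ↦ p^θ_{t-1}(y|x) from ℝ^d to ℝ is differentiable, positive, and satisfies Σ_y p^θ_{t-1}(y|x) = 1 for every θ. Define J(θ) := Σ_{(x_T,…,x_0)} μ(x_T) (Π_{t=T}^{1} p^θ_{t-1}(x_{t-1}|x_t)) · r(x_0). Then J is differentiable and its gradient satisfies the policy gradient identity: ∇_θ J(θ) = Σ_{(x_T,…,x_0)} μ(x_T) (Π_{t=T}^{1} p^θ_{t-1}(x_{t-1}|x_t)) · r(x_0) · Σ_{t=1}^{T} ∇_θ log p^θ_{t-1}(x_{t-1}|x_t), i.e., the gradient of the expected reward equals the expectation, under the trajectory distribution induced by p^θ, of the reward times the sum of per-step score functions. -/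
/-!
Log-derivative trick: where every factor is nonzero, the derivative of a product `∏ᵢ fᵢ` is
`(∏ᵢ fᵢ) • ∑ᵢ ∇ log fᵢ`. Applied to the trajectory probability `μ(x_T) ∏ₜ p^θ_{t-1}(x_{t-1}|x_t)`
this differentiates every summand of `J`, and summing over the finitely many trajectories gives
the identity.
-/

open Real

open Finset

theorem HasFDerivAt.finsetProd_eq_prod_smul_sum_fderiv_log {ι E : Type*}
    [NormedAddCommGroup E] [NormedSpace ℝ E] {s : Finset ι} {f : ι → E → ℝ} {x : E}
    (hf : ∀ i ∈ s, DifferentiableAt ℝ (f i) x) (hne : ∀ i ∈ s, f i x ≠ 0) :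
    HasFDerivAt (fun y => ∏ i ∈ s, f i y)
      ((∏ i ∈ s, f i x) • ∑ i ∈ s, fderiv ℝ (fun y => Real.log (f i y)) x) x := by
  classical
  refine (HasFDerivAt.finsetProd fun i hi => (hf i hi).hasFDerivAt).congr_fderiv ?_
  rw [smul_sum]
  refine sum_congr rfl fun i hi => ?_
  rw [((hf i hi).hasFDerivAt.log (hne i hi)).fderiv, smul_smul, ← mul_prod_erase s _ hi,
    mul_comm (f i x), mul_assoc, mul_inv_cancel₀ (hne i hi), mul_one]

theorem statement13_general {X : Type*} [Fintype X]
    (T : ℕ) (d : ℕ)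
    (r : X → ℝ) (μ : X → ℝ)
    (p : (Fin d → ℝ) → ℕ → X → X → ℝ)
    (hdiff : ∀ t < T, ∀ x y : X, Differentiable ℝ (fun θ => p θ t x y))
    (hpos : ∀ θ : Fin d → ℝ, ∀ t < T, ∀ x y : X, 0 < p θ t x y) :
    Differentiable ℝ (fun θ : Fin d → ℝ =>
      ∑ x : Fin (T + 1) → X,
        μ (x (Fin.last T)) * (∏ t : Fin T, p θ t (x t.succ) (x t.castSucc)) * r (x 0))
    ∧ ∀ θ : Fin d → ℝ,
        fderiv ℝ (fun θ' : Fin d → ℝ =>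
          ∑ x : Fin (T + 1) → X,
            μ (x (Fin.last T)) * (∏ t : Fin T, p θ' t (x t.succ) (x t.castSucc))
              * r (x 0)) θ
        = ∑ x : Fin (T + 1) → X,
            (μ (x (Fin.last T)) * (∏ t : Fin T, p θ t (x t.succ) (x t.castSucc))
              * r (x 0))
            • ∑ t : Fin T,
                fderiv ℝ
                  (fun θ' : Fin d → ℝ =>
                    Real.log (p θ' t (x t.succ) (x t.castSucc))) θ := by
  have hJ : ∀ θ, HasFDerivAt (fun θ' : Fin d → ℝ => ∑ x : Fin (T + 1) → X,
        μ (x (Fin.last T)) * (∏ t : Fin T, p θ' t (x t.succ) (x t.castSucc)) * r (x 0))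
      (∑ x : Fin (T + 1) → X,
        (μ (x (Fin.last T)) * (∏ t : Fin T, p θ t (x t.succ) (x t.castSucc)) * r (x 0))
        • ∑ t : Fin T,
          fderiv ℝ (fun θ' => Real.log (p θ' t (x t.succ) (x t.castSucc))) θ) θ := by
    refine fun θ => HasFDerivAt.fun_sum fun x _ => ?_
    have hprod := HasFDerivAt.finsetProd_eq_prod_smul_sum_fderiv_log (s := univ) (x := θ)
      (f := fun t : Fin T => fun θ' => p θ' t (x t.succ) (x t.castSucc))
      (fun t _ => hdiff t t.isLt _ _ θ) (fun t _ => (hpos θ t t.isLt _ _).ne')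
    refine ((hprod.const_mul (μ (x (Fin.last T)))).mul_const (r (x 0))).congr_fderiv ?_
    rw [smul_smul, smul_smul]
    ring_nf
  exact ⟨fun θ => (hJ θ).differentiableAt, fun θ => (hJ θ).fderiv⟩

/-- policy gradient identity. If each transition probability
`θ ↦ p^θ_{t-1}(y|x)` is differentiable, positive and normalized, then the expected
reward `J(θ) = ∑_{traj} μ(x_T) (∏_t p^θ_{t-1}(x_{t-1}|x_t)) r(x_0)` is
differentiable and
`∇J(θ) = ∑_{traj} μ(x_T) (∏_t p^θ_{t-1}(x_{t-1}|x_t)) r(x_0) ∑_t ∇ log p^θ_{t-1}(x_{t-1}|x_t)`. -/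
theorem statement13 {X : Type*} [Fintype X] [Nonempty X]
    (T : ℕ) (hT : 1 ≤ T) (d : ℕ) (hd : 1 ≤ d)
    (r : X → ℝ) (μ : X → ℝ) (hμ0 : ∀ x, 0 ≤ μ x) (hμ1 : (∑ x, μ x) = 1)
    (p : (Fin d → ℝ) → ℕ → X → X → ℝ)
    (hdiff : ∀ t < T, ∀ x y : X, Differentiable ℝ (fun θ => p θ t x y))
    (hpos : ∀ θ : Fin d → ℝ, ∀ t < T, ∀ x y : X, 0 < p θ t x y)
    (hsum : ∀ θ : Fin d → ℝ, ∀ t < T, ∀ x : X, (∑ y, p θ t x y) = 1) :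
    Differentiable ℝ (fun θ : Fin d → ℝ =>
      ∑ x : Fin (T + 1) → X,
        μ (x (Fin.last T)) * (∏ t : Fin T, p θ t (x t.succ) (x t.castSucc)) * r (x 0))
    ∧ ∀ θ : Fin d → ℝ,
        fderiv ℝ (fun θ' : Fin d → ℝ =>
          ∑ x : Fin (T + 1) → X,
            μ (x (Fin.last T)) * (∏ t : Fin T, p θ' t (x t.succ) (x t.castSucc))
              * r (x 0)) θ
        = ∑ x : Fin (T + 1) → X,
            (μ (x (Fin.last T)) * (∏ t : Fin T, p θ t (x t.succ) (x t.castSucc))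
              * r (x 0))
            • ∑ t : Fin T,
                fderiv ℝ
                  (fun θ' : Fin d → ℝ =>
                    Real.log (p θ' t (x t.succ) (x t.castSucc))) θ :=
  statement13_general T d r μ p hdiff hpos
end
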